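/- Let R be a reduced Noetherian commutative ring and M a finitely generated R-module such that the function p ↦ dim_{κ(p)}(M ⊗_R κ(p)) is constant on Spec R, where κ(p) is the residue field at the prime p. Then M is a projective (equivalently, finite locally free) R-module. -/

import Mathlib

open TensorProduct

/-!
Projectivity of a finitely presented module can be checked on stalks, so fix a prime `p` and put
`A = R_p`. By Nakayama a basis of the closed fiber lifts to a surjection `g : Aⁿ → A ⊗[R] M`.
At every prime `Q` of `A`, the fiber of `g` is a surjection between `κ(Q)`-vector spaces of the
same dimension `n`, hence injective. So each coordinate of a vector in `ker g` vanishes in every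
`κ(Q)`, i.e. lies in every prime of `A`; it is nilpotent, hence zero since `A` is reduced.
-/

section

variable {R : Type*} [CommRing R] {M : Type*} [AddCommGroup M] [Module R M]

theorem Module.finrank_tensorProduct_eq_of_isScalarTower (K L : Type*) [Field K] [Field L]
    [Algebra R K] [Algebra R L] [Algebra K L] [IsScalarTower R K L] :
    Module.finrank L (L ⊗[R] M) = Module.finrank K (K ⊗[R] M) := by
  rw [← (AlgebraTensorModule.cancelBaseChange R K L L M).finrank_eq, Module.finrank_baseChange]

theorem Ideal.finrank_fiber_comap {A : Type*} [CommRing A] [Algebra R A]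
    (Q : Ideal A) [Q.IsPrime] :
    Module.finrank Q.ResidueField (Q.ResidueField ⊗[R] M) =
      Module.finrank (Q.comap (algebraMap R A)).ResidueField
        ((Q.comap (algebraMap R A)).ResidueField ⊗[R] M) := by
  let q := Q.comap (algebraMap R A)
  let : Algebra q.ResidueField Q.ResidueField :=
    (Ideal.ResidueField.map q Q (algebraMap R A) rfl).toAlgebra
  have : IsScalarTower R q.ResidueField Q.ResidueField := .of_algebraMap_eq fun r ↦ by
    rw [RingHom.algebraMap_toAlgebra, Ideal.ResidueField.map_algebraMap,
      ← IsScalarTower.algebraMap_apply]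
  exact Module.finrank_tensorProduct_eq_of_isScalarTower _ _

theorem LinearMap.injective_of_forall_injective_baseChange_residueField [IsReduced R] {ι : Type*}
    (g : (ι → R) →ₗ[R] M)
    (hg : ∀ p : PrimeSpectrum R, Function.Injective (g.baseChange p.asIdeal.ResidueField)) :
    Function.Injective g := by
  refine (injective_iff_map_eq_zero g).mpr fun x hx ↦ funext fun i ↦ ?_
  suffices x i ∈ nilradical R by simpa [nilradical_eq_zero] using this
  rw [nilradical_eq_sInf, Ideal.mem_sInf]
  intro Q (hQ : Q.IsPrime)
  have hx1 : (1 : Q.ResidueField) ⊗ₜ[R] x = 0 := hg ⟨Q, hQ⟩ (by simp [hx])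
  have := congrFun (congrArg (piScalarRightHom R Q.ResidueField Q.ResidueField ι) hx1) i
  simpa [Algebra.smul_def] using this

theorem LinearMap.bijective_of_surjective_of_forall_finrank_fiber_eq [IsReduced R] {ι : Type*}
    [Fintype ι] [DecidableEq ι] (g : (ι → R) →ₗ[R] M) (hg : Function.Surjective g)
    (h : ∀ p : PrimeSpectrum R,
      Module.finrank p.asIdeal.ResidueField (p.asIdeal.ResidueField ⊗[R] M) = Fintype.card ι) :
    Function.Bijective g := by
  refine ⟨g.injective_of_forall_injective_baseChange_residueField fun p ↦ ?_, hg⟩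
  have : Module.Finite R M := .of_surjective g hg
  rw [LinearMap.injective_iff_surjective_of_finrank_eq_finrank]
  · exact LinearMap.baseChange_surjective _ hg
  · rw [(piScalarRight R _ _ ι).finrank_eq, Module.finrank_fintype_fun_eq_card, h]

theorem IsLocalRing.exists_surjective_of_finrank_residueField_tensorProduct [IsLocalRing R]
    [Module.Finite R M] :
    ∃ g : (Fin (Module.finrank (ResidueField R) (ResidueField R ⊗[R] M)) → R) →ₗ[R] M,
      Function.Surjective g := by
  let b := Module.finBasis (ResidueField R) (ResidueField R ⊗[R] M)
  choose f hf using TensorProduct.mk_surjective R M (ResidueField R) Ideal.Quotient.mk_surjective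
  refine ⟨Fintype.linearCombination R (f ∘ b), ?_⟩
  rw [← LinearMap.range_eq_top, Fintype.range_linearCombination]
  exact span_eq_top_of_tmul_eq_basis _ b fun i ↦ hf (b i)

end

/-- A finitely generated module over a reduced Noetherian ring with constant
fiber dimension is projective. -/
theorem projective_of_constant_fiber_dimension {R M : Type*} [CommRing R]
    [IsNoetherianRing R] [IsReduced R] [AddCommGroup M] [Module R M]
    [Module.Finite R M] (n : ℕ)
    (h : ∀ p : PrimeSpectrum R,
      Module.finrank (IsLocalRing.ResidueField (Localization.AtPrime p.asIdeal))
        ((IsLocalRing.ResidueField (Localization.AtPrime p.asIdeal)) ⊗[R] M) = n) :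
    Module.Projective R M := by
  have := Module.finitePresentation_of_finite R M
  rw [← Module.freeLocus_eq_univ_iff, Set.eq_univ_iff_forall]
  intro p
  let A := Localization.AtPrime p.asIdeal
  rw [Module.mem_freeLocus_iff_tensor p A]
  have fiber_eq (F : Type _) [Field F] [Algebra A F] [Algebra R F] [IsScalarTower R A F] :
      Module.finrank F (F ⊗[A] (A ⊗[R] M)) = Module.finrank F (F ⊗[R] M) :=
    (AlgebraTensorModule.cancelBaseChange R A F F M).finrank_eq
  obtain ⟨g, hg⟩ := IsLocalRing.exists_surjective_of_finrank_residueField_tensorProduct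
    (R := A) (M := A ⊗[R] M)
  refine .of_equiv (LinearEquiv.ofBijective g
    (g.bijective_of_surjective_of_forall_finrank_fiber_eq hg fun Q ↦ ?_))
  rw [fiber_eq, Ideal.finrank_fiber_comap, h ⟨_, inferInstance⟩, Fintype.card_fin, fiber_eq,
    h p]
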